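/- Fix an integer d ≥ 3, δ ∈ (0, 2/(d−2)], β > 0, ε ∈ (0,1) with 4^{d−2} ε^{(d−2)δ} ≤ 1/2, a positive integer k, and any finite set A ⊂ ℤ^d with #A ≤ k^d. Let S_A := k^{−d} Σ_{w ∈ A} Y_{ε,w} 1_{ρ_w < T_ε}. Then there is C = C(d) such that E[ (S_A − E[ρ^{d−2}])² ] ≤ C ( E[ρ^{2(d−2)} 1_{ρ < T_ε}] + ε^{2(2/(d−2) − δ)β} ). -/

import Mathlib

open MeasureTheory ProbabilityTheory

noncomputable section

/-- The truncation threshold `T_ε := ε^{−2/(d−2)+δ}`. -/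
def Ttrunc (d : ℕ) (ε δ : ℝ) : ℝ := ε ^ (-(2 / ((d : ℝ) - 2)) + δ)

/-- `Y_{ε} 1_{ρ < T_ε}` as a function of the mark:
`x ↦ x^{d−2} / (1 − 4^{d−2} ε² x^{d−2})` on `{x < T_ε}`, `0` otherwise. -/
def Yind (d : ℕ) (ε δ : ℝ) : ℝ → ℝ :=
  Set.indicator {x | x < Ttrunc d ε δ}
    (fun x => x ^ ((d : ℝ) - 2) / (1 - 4 ^ ((d : ℝ) - 2) * ε ^ 2 * x ^ ((d : ℝ) - 2)))

/-! Since `k^{-d} #A ≤ 1`, Cauchy–Schwarz and the identical distribution of the marks bound the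
second moment by `2 E[Y²] + 2 (E ρ^{d-2})²`. On `{ρ < T_ε}` the denominator of `Y` is at least
`1/2`, so `Y² ≤ 4 ρ^{2(d-2)} 1_{ρ<T_ε}`. Splitting `E ρ^{d-2}` at `T_ε`, Jensen bounds the square
of the truncated part by `E[ρ^{2(d-2)} 1_{ρ<T_ε}]`, and the moment assumption bounds the tail by
`T_ε^{-β} = ε^{(2/(d-2) - δ) β}`. -/

open Finset

lemma rpow_le_rpow_neg_mul_rpow_add {x T p β : ℝ} (hT : 0 < T) (hTx : T ≤ x) (hβ : 0 ≤ β) :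
    x ^ p ≤ T ^ (-β) * x ^ (p + β) := by
  have hx : 0 < x := hT.trans_le hTx
  rw [Real.rpow_add hx, Real.rpow_neg hT.le, mul_left_comm]
  refine le_mul_of_one_le_right (by positivity) ?_
  rw [inv_mul_eq_div, one_le_div (by positivity)]
  exact Real.rpow_le_rpow hT.le hTx hβ

lemma rpow_neg_mul_le_one_of_le_pow {k d n : ℕ} (hk : 0 < k) (hn : n ≤ k ^ d) :
    (k : ℝ) ^ (-(d : ℝ)) * n ≤ 1 := by
  have hk0 : (0 : ℝ) < k := by exact_mod_cast hk
  rw [Real.rpow_neg hk0.le, Real.rpow_natCast, inv_mul_le_iff₀ (by positivity), mul_one]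
  exact_mod_cast hn

lemma sq_mul_sum_sub_le {ι : Type*} (A : Finset ι) (y : ι → ℝ) {c : ℝ} (hc : 0 ≤ c)
    (hcA : c * #A ≤ 1) (m : ℝ) :
    (c * ∑ w ∈ A, y w - m) ^ 2 ≤ 2 * c * ∑ w ∈ A, y w ^ 2 + 2 * m ^ 2 := by
  have hsq : 0 ≤ ∑ w ∈ A, y w ^ 2 := sum_nonneg fun w _ => sq_nonneg (y w)
  calc (c * ∑ w ∈ A, y w - m) ^ 2 ≤ 2 * ((c * ∑ w ∈ A, y w) ^ 2 + m ^ 2) := by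
        simpa only [sub_eq_add_neg, neg_sq] using add_sq_le (a := c * ∑ w ∈ A, y w) (b := -m)
    _ = 2 * c * (c * (∑ w ∈ A, y w) ^ 2) + 2 * m ^ 2 := by ring
    _ ≤ 2 * c * (c * #A * ∑ w ∈ A, y w ^ 2) + 2 * m ^ 2 := by
        rw [mul_assoc c]; gcongr; exact sq_sum_le_card_mul_sum_sq
    _ ≤ 2 * c * ∑ w ∈ A, y w ^ 2 + 2 * m ^ 2 := by
        gcongr; exact mul_le_of_le_one_left hsq hcA

section TruncatedPower

variable {T p x : ℝ}

lemma indicator_rpow_nonneg {s : Set ℝ} (hx : 0 ≤ x) : 0 ≤ s.indicator (fun y => y ^ p) x :=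
  Set.indicator_apply_nonneg fun _ => Real.rpow_nonneg hx p

lemma indicator_rpow_le (hT : 0 ≤ T) (hp : 0 ≤ p) (hx : 0 ≤ x) :
    {y | y < T}.indicator (fun y => y ^ p) x ≤ T ^ p :=
  Set.indicator_apply_le' (fun hxT => Real.rpow_le_rpow hx (le_of_lt hxT) hp)
    fun _ => Real.rpow_nonneg hT p

lemma indicator_rpow_sq (hx : 0 ≤ x) :
    {y | y < T}.indicator (fun y => y ^ p) x ^ 2
      = {y | y < T}.indicator (fun y => y ^ (2 * p)) x := by
  by_cases hxT : x < T
  · simp only [Set.indicator_of_mem (show x ∈ {y | y < T} from hxT)]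
    rw [mul_comm, Real.rpow_mul hx, Real.rpow_two]
  · simp [Set.indicator_of_notMem (show x ∉ {y | y < T} from hxT)]

lemma indicator_compl_rpow_le {β : ℝ} (hT : 0 < T) (hβ : 0 ≤ β) (hx : 0 ≤ x) :
    {y | y < T}ᶜ.indicator (fun y => y ^ p) x ≤ T ^ (-β) * x ^ (p + β) :=
  Set.indicator_apply_le' (fun hTx => rpow_le_rpow_neg_mul_rpow_add hT (not_lt.1 hTx) hβ)
    fun _ => mul_nonneg (Real.rpow_nonneg hT.le _) (Real.rpow_nonneg hx _)

end TruncatedPower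

section Moments

variable {Ω : Type*} [MeasurableSpace Ω] {P : Measure Ω}

lemma integrable_and_integral_le_one_of_lintegral_le_one {f : Ω → ℝ} (hf : AEStronglyMeasurable f P)
    (hf0 : 0 ≤ᵐ[P] f) (h : ∫⁻ ω, ENNReal.ofReal (f ω) ∂P ≤ 1) :
    Integrable f P ∧ ∫ ω, f ω ∂P ≤ 1 := by
  refine ⟨⟨hf, (hasFiniteIntegral_iff_ofReal hf0).2 (h.trans_lt ENNReal.one_lt_top)⟩, ?_⟩
  rw [integral_eq_lintegral_of_nonneg_ae hf0 hf]
  simpa using ENNReal.toReal_mono ENNReal.one_ne_top h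

lemma integrable_indicator_compl_rpow_comp {X : Ω → ℝ} (hX : Measurable X)
    (hX0 : ∀ ω, 0 ≤ X ω) {T p β : ℝ} (hT : 0 < T) (hβ : 0 ≤ β)
    (hint : Integrable (fun ω => X ω ^ (p + β)) P) :
    Integrable (fun ω => {y | y < T}ᶜ.indicator (fun y => y ^ p) (X ω)) P :=
  (hint.const_mul (T ^ (-β))).mono'
    ((Measurable.indicator (by fun_prop) measurableSet_Iio.compl).comp hX).aestronglyMeasurable
    (ae_of_all _ fun ω => by
      rw [Real.norm_of_nonneg (indicator_rpow_nonneg (hX0 ω))]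
      exact indicator_compl_rpow_le hT hβ (hX0 ω))

lemma integral_indicator_compl_rpow_le {X : Ω → ℝ} (hX0 : ∀ ω, 0 ≤ X ω) {T p β : ℝ}
    (hT : 0 < T) (hβ : 0 ≤ β) (hint : Integrable (fun ω => X ω ^ (p + β)) P) :
    ∫ ω, {y | y < T}ᶜ.indicator (fun y => y ^ p) (X ω) ∂P
      ≤ T ^ (-β) * ∫ ω, X ω ^ (p + β) ∂P := by
  rw [← integral_const_mul]
  exact integral_mono_of_nonneg
    (ae_of_all _ fun ω => indicator_rpow_nonneg (hX0 ω))
    (hint.const_mul _) (ae_of_all _ fun ω => indicator_compl_rpow_le hT hβ (hX0 ω))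

lemma memLp_indicator_rpow_comp [IsFiniteMeasure P] {X : Ω → ℝ} (hX : Measurable X)
    (hX0 : ∀ ω, 0 ≤ X ω) {T p : ℝ} (hT : 0 ≤ T) (hp : 0 ≤ p) (q : ENNReal) :
    MemLp (fun ω => {y | y < T}.indicator (fun y => y ^ p) (X ω)) q P :=
  .of_bound ((Measurable.indicator (by fun_prop) measurableSet_Iio).comp hX).aestronglyMeasurable
    (T ^ p) (ae_of_all _ fun ω => by
      rw [Real.norm_of_nonneg (indicator_rpow_nonneg (hX0 ω))]
      exact indicator_rpow_le hT hp (hX0 ω))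

variable [IsProbabilityMeasure P]

lemma sq_integral_le_integral_sq {f : Ω → ℝ} (hf : MemLp f 2 P) :
    (∫ ω, f ω ∂P) ^ 2 ≤ ∫ ω, f ω ^ 2 ∂P := by
  have := variance_eq_sub hf ▸ variance_nonneg f P
  simpa using this

lemma integral_sq_mul_sum_sub_le {ι : Type*} (A : Finset ι) {Y : ι → Ω → ℝ}
    {Z : Ω → ℝ} (hY : ∀ w ∈ A, MemLp (Y w) 2 P)
    (hYZ : ∀ w ∈ A, ∫ ω, Y w ω ^ 2 ∂P = ∫ ω, Z ω ^ 2 ∂P)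
    {c : ℝ} (hc : 0 ≤ c) (hcA : c * #A ≤ 1) (m : ℝ) :
    ∫ ω, (c * ∑ w ∈ A, Y w ω - m) ^ 2 ∂P ≤ 2 * ∫ ω, Z ω ^ 2 ∂P + 2 * m ^ 2 := by
  have hY2 : ∀ w ∈ A, Integrable (fun ω => Y w ω ^ 2) P := fun w hw => (hY w hw).integrable_sq
  have hlhs : Integrable (fun ω => (c * ∑ w ∈ A, Y w ω - m) ^ 2) P :=
    (((memLp_finsetSum A hY).const_mul c).sub (memLp_const m)).integrable_sq
  have hrhs : Integrable (fun ω => 2 * c * ∑ w ∈ A, Y w ω ^ 2 + 2 * m ^ 2) P :=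
    ((integrable_finsetSum A hY2).const_mul _).add (integrable_const _)
  have hZ : c * #A * ∫ ω, Z ω ^ 2 ∂P ≤ ∫ ω, Z ω ^ 2 ∂P :=
    mul_le_of_le_one_left (integral_nonneg fun ω => sq_nonneg (Z ω)) hcA
  calc ∫ ω, (c * ∑ w ∈ A, Y w ω - m) ^ 2 ∂P
      ≤ ∫ ω, (2 * c * ∑ w ∈ A, Y w ω ^ 2 + 2 * m ^ 2) ∂P :=
        integral_mono hlhs hrhs fun ω => sq_mul_sum_sub_le A (Y · ω) hc hcA m
    _ = 2 * (c * #A * ∫ ω, Z ω ^ 2 ∂P) + 2 * m ^ 2 := by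
        rw [integral_add ((integrable_finsetSum A hY2).const_mul _) (integrable_const _),
          integral_const_mul, integral_finsetSum A hY2, sum_congr rfl hYZ]
        simp only [sum_const, nsmul_eq_mul, integral_const, probReal_univ, smul_eq_mul]
        ring
    _ ≤ 2 * ∫ ω, Z ω ^ 2 ∂P + 2 * m ^ 2 := by linarith

lemma sq_integral_rpow_le {X : Ω → ℝ} (hX : Measurable X) (hX0 : ∀ ω, 0 ≤ X ω)
    {T p β : ℝ} (hT : 0 < T) (hp : 0 ≤ p) (hβ : 0 ≤ β)
    (hmom : ∫⁻ ω, ENNReal.ofReal (X ω ^ (p + β)) ∂P ≤ 1) :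
    (∫ ω, X ω ^ p ∂P) ^ 2
      ≤ 2 * ∫ ω, {y | y < T}.indicator (fun y => y ^ (2 * p)) (X ω) ∂P
        + 2 * (T ^ (-β)) ^ 2 := by
  obtain ⟨hint, hmom⟩ := integrable_and_integral_le_one_of_lintegral_le_one
    (hX.pow_const _).aestronglyMeasurable (ae_of_all _ fun ω => Real.rpow_nonneg (hX0 ω) _) hmom
  set low : Ω → ℝ := fun ω => {y | y < T}.indicator (fun y => y ^ p) (X ω)
  set high : Ω → ℝ := fun ω => {y | y < T}ᶜ.indicator (fun y => y ^ p) (X ω)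
  have hlow : MemLp low 2 P := memLp_indicator_rpow_comp hX hX0 hT.le hp 2
  have hsplit : ∫ ω, X ω ^ p ∂P = ∫ ω, low ω ∂P + ∫ ω, high ω ∂P := by
    rw [← integral_add (memLp_one_iff_integrable.1 (memLp_indicator_rpow_comp hX hX0 hT.le hp 1))
      (integrable_indicator_compl_rpow_comp hX hX0 hT hβ hint)]
    simp only [Set.indicator_self_add_compl_apply]
  have htail : ∫ ω, high ω ∂P ≤ T ^ (-β) :=
    (integral_indicator_compl_rpow_le hX0 hT hβ hint).trans
      (mul_le_of_le_one_right (Real.rpow_nonneg hT.le _) hmom)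
  calc (∫ ω, X ω ^ p ∂P) ^ 2
      ≤ 2 * ((∫ ω, low ω ∂P) ^ 2 + (∫ ω, high ω ∂P) ^ 2) := by
        rw [hsplit]; exact add_sq_le
    _ ≤ 2 * (∫ ω, low ω ^ 2 ∂P + (T ^ (-β)) ^ 2) := by
        gcongr
        · exact sq_integral_le_integral_sq hlow
        · exact integral_nonneg fun ω => indicator_rpow_nonneg (hX0 ω)
    _ = _ := by simp only [low, indicator_rpow_sq (hX0 _)]; ring

end Moments

section MarkFunction

variable {d : ℕ} {ε δ x : ℝ}

lemma Ttrunc_pos (hε : 0 < ε) : 0 < Ttrunc d ε δ := Real.rpow_pos_of_pos hε _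

lemma sq_mul_Ttrunc_rpow (hd : (d : ℝ) - 2 ≠ 0) (hε : 0 < ε) :
    ε ^ 2 * Ttrunc d ε δ ^ ((d : ℝ) - 2) = ε ^ (((d : ℝ) - 2) * δ) := by
  rw [Ttrunc, ← Real.rpow_mul hε.le, ← Real.rpow_natCast ε 2, ← Real.rpow_add hε]
  congr 1
  field_simp
  ring

lemma Ttrunc_rpow_neg_sq (hε : 0 < ε) (β : ℝ) :
    (Ttrunc d ε δ ^ (-β)) ^ 2 = ε ^ (2 * (2 / ((d : ℝ) - 2) - δ) * β) := by
  rw [Ttrunc, ← Real.rpow_mul hε.le, ← Real.rpow_natCast _ 2, ← Real.rpow_mul hε.le]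
  congr 1
  push_cast
  ring

lemma half_le_one_sub_mul_rpow (hd : 0 < (d : ℝ) - 2) (hε : 0 < ε)
    (hsmall : (4 : ℝ) ^ ((d : ℝ) - 2) * ε ^ (((d : ℝ) - 2) * δ) ≤ 1 / 2)
    (hx : 0 ≤ x) (hxT : x < Ttrunc d ε δ) :
    1 / 2 ≤ 1 - 4 ^ ((d : ℝ) - 2) * ε ^ 2 * x ^ ((d : ℝ) - 2) := by
  have : 4 ^ ((d : ℝ) - 2) * ε ^ 2 * x ^ ((d : ℝ) - 2)
      ≤ 4 ^ ((d : ℝ) - 2) * ε ^ (((d : ℝ) - 2) * δ) := by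
    rw [← sq_mul_Ttrunc_rpow hd.ne' hε, ← mul_assoc]
    gcongr
  linarith

lemma Yind_mem_Icc (hd : 0 < (d : ℝ) - 2) (hε : 0 < ε)
    (hsmall : (4 : ℝ) ^ ((d : ℝ) - 2) * ε ^ (((d : ℝ) - 2) * δ) ≤ 1 / 2) (hx : 0 ≤ x) :
    Yind d ε δ x
      ∈ Set.Icc 0 (2 * {y | y < Ttrunc d ε δ}.indicator (fun y => y ^ ((d : ℝ) - 2)) x) := by
  by_cases hxT : x < Ttrunc d ε δ
  · have hD := half_le_one_sub_mul_rpow hd hε hsmall hx hxT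
    have hxp := Real.rpow_nonneg hx ((d : ℝ) - 2)
    simp only [Yind, Set.indicator_of_mem (show x ∈ {y | y < Ttrunc d ε δ} from hxT)]
    refine ⟨div_nonneg hxp (by linarith), ?_⟩
    rw [div_le_iff₀ (by linarith)]
    nlinarith
  · simp [Yind, Set.indicator_of_notMem (show x ∉ {y | y < Ttrunc d ε δ} from hxT)]

lemma measurable_Yind : Measurable (Yind d ε δ) :=
  Measurable.indicator (by fun_prop) measurableSet_Iio

lemma Yind_sq_le (hd : 0 < (d : ℝ) - 2) (hε : 0 < ε)
    (hsmall : (4 : ℝ) ^ ((d : ℝ) - 2) * ε ^ (((d : ℝ) - 2) * δ) ≤ 1 / 2) (hx : 0 ≤ x) :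
    Yind d ε δ x ^ 2
      ≤ 4 * {y | y < Ttrunc d ε δ}.indicator (fun y => y ^ (2 * ((d : ℝ) - 2))) x := by
  obtain ⟨h0, h1⟩ := Yind_mem_Icc hd hε hsmall hx
  rw [← indicator_rpow_sq hx]
  nlinarith [pow_le_pow_left₀ h0 h1 2]

lemma memLp_Yind_comp {Ω : Type*} [MeasurableSpace Ω] {P : Measure Ω} [IsFiniteMeasure P]
    (hd : 0 < (d : ℝ) - 2) (hε : 0 < ε)
    (hsmall : (4 : ℝ) ^ ((d : ℝ) - 2) * ε ^ (((d : ℝ) - 2) * δ) ≤ 1 / 2)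
    {X : Ω → ℝ} (hX : Measurable X) (hX0 : ∀ ω, 0 ≤ X ω) :
    MemLp (fun ω => Yind d ε δ (X ω)) 2 P :=
  .of_bound (measurable_Yind.comp hX).aestronglyMeasurable (2 * Ttrunc d ε δ ^ ((d : ℝ) - 2))
    (ae_of_all _ fun ω => by
      obtain ⟨h0, h1⟩ := Yind_mem_Icc hd hε hsmall (hX0 ω)
      rw [Real.norm_of_nonneg h0]
      exact h1.trans (by gcongr; exact indicator_rpow_le (Ttrunc_pos hε).le hd.le (hX0 ω)))

lemma integral_sq_Yind_comp_le {Ω : Type*} [MeasurableSpace Ω] {P : Measure Ω}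
    [IsFiniteMeasure P] (hd : 0 < (d : ℝ) - 2) (hε : 0 < ε)
    (hsmall : (4 : ℝ) ^ ((d : ℝ) - 2) * ε ^ (((d : ℝ) - 2) * δ) ≤ 1 / 2)
    {X : Ω → ℝ} (hX : Measurable X) (hX0 : ∀ ω, 0 ≤ X ω) :
    ∫ ω, Yind d ε δ (X ω) ^ 2 ∂P ≤
      4 * ∫ ω, {y | y < Ttrunc d ε δ}.indicator (fun y => y ^ (2 * ((d : ℝ) - 2))) (X ω) ∂P :=
  (integral_mono (memLp_Yind_comp hd hε hsmall hX hX0).integrable_sq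
    ((memLp_one_iff_integrable.1
      (memLp_indicator_rpow_comp hX hX0 (Ttrunc_pos hε).le (by positivity) 1)).const_mul 4)
    fun ω => Yind_sq_le hd hε hsmall (hX0 ω)).trans_eq (integral_const_mul _ _)

end MarkFunction

/-- crude second-moment bound for the averaged truncated marks over an
arbitrary finite set `A ⊂ ℤ^d` with `#A ≤ k^d` (marks only identically distributed),
with `C = C(d)`. -/
theorem averaged_marks_boundary_second_moment (d : ℕ) (hd : 3 ≤ d) :
    ∃ C > 0, ∀ (δ β ε : ℝ) (k : ℕ),
      δ ∈ Set.Ioc (0 : ℝ) (2 / ((d : ℝ) - 2)) → 0 < β →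
      ε ∈ Set.Ioo (0 : ℝ) 1 →
      (4 : ℝ) ^ ((d : ℝ) - 2) * ε ^ (((d : ℝ) - 2) * δ) ≤ 1 / 2 →
      1 ≤ k →
      ∀ (A : Finset (Fin d → ℤ)), A.card ≤ k ^ d →
      ∀ (Ω : Type) (_ : MeasurableSpace Ω) (P : Measure Ω), IsProbabilityMeasure P →
      ∀ (ρ : (Fin d → ℤ) → Ω → ℝ),
        (∀ z, Measurable (ρ z)) →
        (∀ z ω, 0 ≤ ρ z ω) →
        (∀ z, IdentDistrib (ρ z) (ρ 0) P P) →
        (∫⁻ ω, ENNReal.ofReal (ρ 0 ω ^ ((d : ℝ) - 2 + β)) ∂P ≤ 1) →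
        ∫ ω, ((k : ℝ) ^ (-(d : ℝ)) * (∑ w ∈ A, Yind d ε δ (ρ w ω))
              - ∫ ω', ρ 0 ω' ^ ((d : ℝ) - 2) ∂P) ^ 2 ∂P
          ≤ C * ((∫ ω, Set.indicator {x | x < Ttrunc d ε δ}
                  (fun x => x ^ (2 * ((d : ℝ) - 2))) (ρ 0 ω) ∂P)
              + ε ^ (2 * (2 / ((d : ℝ) - 2) - δ) * β)) := by
  refine ⟨12, by norm_num, ?_⟩
  rintro δ β ε k - hβ ⟨hε, -⟩ hsmall hk A hA Ω _ P _ ρ hmeas hnn hid hmom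
  have hd2 : 0 < (d : ℝ) - 2 := by
    have : (3 : ℝ) ≤ d := by exact_mod_cast hd
    linarith
  have hvar := integral_sq_mul_sum_sub_le A (Z := fun ω => Yind d ε δ (ρ 0 ω))
    (fun w _ => memLp_Yind_comp hd2 hε hsmall (hmeas w) (hnn w))
    (fun w _ => ((hid w).comp (measurable_Yind.pow_const 2)).integral_eq)
    (by positivity) (rpow_neg_mul_le_one_of_le_pow hk hA) (∫ ω', ρ 0 ω' ^ ((d : ℝ) - 2) ∂P)
  have hY0 := integral_sq_Yind_comp_le (P := P) hd2 hε hsmall (hmeas 0) (hnn 0)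
  have hmean := sq_integral_rpow_le (hmeas 0) (hnn 0) (Ttrunc_pos (d := d) (δ := δ) hε) hd2.le
    hβ.le hmom
  rw [Ttrunc_rpow_neg_sq hε β] at hmean
  linarith [Real.rpow_nonneg hε.le (2 * (2 / ((d : ℝ) - 2) - δ) * β)]
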